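/- Let A ∈ B(H) be injective, g ∈ H, (u_n), (v_n) orthonormal bases with projections P_N, Q_N. Suppose f^{(N)} ∈ P_N H satisfy ‖Q_N A P_N f^{(N)} − Q_N g‖ → 0 and f^{(N)} converges strongly in H to some vector. Then g ∈ ran A; moreover, letting f be the unique solution of A f = g, both ‖f − f^{(N)}‖ → 0 and ‖g − A f^{(N)}‖ → 0 as N → ∞. -/

import Mathlib

open scoped InnerProductSpace
open Filter

/-- Orthogonal projection onto the span of the first `N` vectors of an orthonormal
basis, written as a sum of rank-one operators `∑_{n<N} |u n⟩⟨u n|`. -/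
noncomputable def truncProj {H : Type*} [NormedAddCommGroup H] [InnerProductSpace ℂ H]
    (u : ℕ → H) (N : ℕ) : H →L[ℂ] H :=
  ∑ n ∈ Finset.range N, (innerSL ℂ (u n)).smulRight (u n)

section Aux

variable {H : Type*} [NormedAddCommGroup H] [InnerProductSpace ℂ H]

lemma truncProj_apply (u : ℕ → H) (N : ℕ) (x : H) :
    truncProj u N x = ∑ n ∈ Finset.range N, ⟪u n, x⟫_ℂ • u n := by
  simp [truncProj]

lemma truncProj_norm_le {u : ℕ → H} (hu : Orthonormal ℂ u) (N : ℕ) (x : H) :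
    ‖truncProj u N x‖ ≤ ‖x‖ := by
  have h1 : ‖truncProj u N x‖ ^ 2 ≤ ‖x‖ ^ 2 := by
    rw [truncProj_apply]
    have hsum := hu.inner_sum (fun n => ⟪u n, x⟫_ℂ) (fun n => ⟪u n, x⟫_ℂ) (Finset.range N)
    have hsq : ‖∑ n ∈ Finset.range N, ⟪u n, x⟫_ℂ • u n‖ ^ 2
        = ∑ n ∈ Finset.range N, ‖⟪u n, x⟫_ℂ‖ ^ 2 := by
      rw [← inner_self_eq_norm_sq (𝕜 := ℂ), hsum, map_sum]
      exact Finset.sum_congr rfl fun n _ => by rw [RCLike.conj_mul]; norm_cast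
    rw [hsq]
    exact hu.sum_inner_products_le x
  exact (pow_le_pow_iff_left₀ (norm_nonneg _) (norm_nonneg _) two_ne_zero).mp h1

lemma truncProj_fix {u : ℕ → H} (hu : Orthonormal ℂ u) {N : ℕ} {x : H}
    (hx : x ∈ Submodule.span ℂ (u '' Set.Iio N)) : truncProj u N x = x := by
  induction hx using Submodule.span_induction with
  | mem y hy =>
    obtain ⟨m, hm, rfl⟩ := hy
    rw [truncProj_apply]
    rw [Finset.sum_eq_single m]
    · simp [orthonormal_iff_ite.mp hu, hu.1 m]
    · intro n _ hnm
      simp [orthonormal_iff_ite.mp hu, hnm]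
    · intro hm'
      exact absurd (Finset.mem_range.mpr hm) hm'
  | zero => simp
  | add y z _ _ hy hz => rw [map_add, hy, hz]
  | smul c y _ hy => rw [map_smul, hy]

lemma truncProj_tendsto [CompleteSpace H] (v : HilbertBasis ℕ ℂ H) (x : H) :
    Tendsto (fun N => truncProj (v : ℕ → H) N x) atTop (nhds x) := by
  have h := (v.hasSum_repr x).tendsto_sum_nat
  refine h.congr fun N => ?_
  rw [truncProj_apply]
  exact Finset.sum_congr rfl fun n _ => by rw [v.repr_apply_apply]

end Aux

/-- Bounded case: if the truncated residuals vanish and the approximants converge in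
norm, then `g ∈ ran A` and both error and residual vanish in norm. -/
theorem stmt7 (H : Type*) [NormedAddCommGroup H] [InnerProductSpace ℂ H]
    [CompleteSpace H]
    (A : H →L[ℂ] H) (hinj : Function.Injective A) (g : H)
    (u v : HilbertBasis ℕ ℂ H)
    (fN : ℕ → H)
    (hmem : ∀ N : ℕ, fN N ∈ Submodule.span ℂ ((u : ℕ → H) '' Set.Iio N))
    (hres : Tendsto (fun N : ℕ =>
        ‖truncProj (v : ℕ → H) N (A (truncProj (u : ℕ → H) N (fN N)))
          - truncProj (v : ℕ → H) N g‖) atTop (nhds 0))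
    (hconv : ∃ flim : H, Tendsto fN atTop (nhds flim)) :
    g ∈ Set.range A ∧
      ∀ f : H, A f = g →
        Tendsto (fun N : ℕ => ‖f - fN N‖) atTop (nhds 0) ∧
        Tendsto (fun N : ℕ => ‖g - A (fN N)‖) atTop (nhds 0) := by
  obtain ⟨flim, hflim⟩ := hconv
  have hfix : ∀ N, truncProj (u : ℕ → H) N (fN N) = fN N :=
    fun N => truncProj_fix u.orthonormal (hmem N)
  -- A (fN N) → A flim
  have hAfN : Tendsto (fun N => A (fN N)) atTop (nhds (A flim)) :=
    (A.continuous.tendsto _).comp hflim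
  -- Q_N (A (fN N)) → A flim
  have hQ1 : Tendsto (fun N => truncProj (v : ℕ → H) N (A (fN N))) atTop (nhds (A flim)) := by
    have hsplit : ∀ N, truncProj (v : ℕ → H) N (A (fN N))
        = truncProj (v : ℕ → H) N (A (fN N) - A flim) + truncProj (v : ℕ → H) N (A flim) := by
      intro N; rw [map_sub]; abel
    have h1 : Tendsto (fun N => truncProj (v : ℕ → H) N (A (fN N) - A flim)) atTop (nhds 0) := by
      rw [tendsto_zero_iff_norm_tendsto_zero]
      refine squeeze_zero (fun N => norm_nonneg _)
        (fun N => truncProj_norm_le v.orthonormal N _) ?_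
      have := tendsto_iff_norm_sub_tendsto_zero.mp hAfN
      simpa using this
    have h2 := truncProj_tendsto v (A flim)
    have := h1.add h2
    rw [zero_add] at this
    exact this.congr fun N => (hsplit N).symm
  have hQg := truncProj_tendsto v g
  -- residual tends to 0
  have hres0 : Tendsto (fun N => truncProj (v : ℕ → H) N (A (fN N))
      - truncProj (v : ℕ → H) N g) atTop (nhds 0) := by
    rw [tendsto_zero_iff_norm_tendsto_zero]
    refine hres.congr fun N => ?_
    rw [hfix N]
  have hlim2 : Tendsto (fun N => truncProj (v : ℕ → H) N (A (fN N))
      - truncProj (v : ℕ → H) N g) atTop (nhds (A flim - g)) := hQ1.sub hQg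
  have hAg : A flim = g := by
    have := tendsto_nhds_unique hlim2 hres0
    rwa [sub_eq_zero] at this
  refine ⟨⟨flim, hAg⟩, fun f hf => ?_⟩
  have hfl : f = flim := hinj (by rw [hf, hAg])
  subst hfl
  constructor
  · have := tendsto_iff_norm_sub_tendsto_zero.mp hflim
    refine this.congr fun N => ?_
    rw [norm_sub_rev]
  · rw [← hAg]
    have := tendsto_iff_norm_sub_tendsto_zero.mp hAfN
    refine this.congr fun N => ?_
    rw [norm_sub_rev]
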